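/- In the two-group, two-solution instance with u(S_1,G_1) = ε, u(S_1,G_2) = 1/2, u(S_2,G_1) = 0, u(S_2,G_2) = 1 (for ε = 1/10): both S_1 and S_2 are ε-recursively approximate leximax, but S_2 is the unique ε-significant solution, i.e., the recursion with constant slack ε gives S_1^ε = {S_1, S_2} and S_2^ε = {S_2}. -/
import Mathlib


open scoped Classical

/-- The vector of the values of `w` sorted in nondecreasing order;
`sortedVec m w i` is the `i`-th smallest value of `w`. -/
noncomputable def sortedVec (m : ℕ) (w : Fin m → ℝ) : Fin m → ℝ :=
  fun i => ((Finset.univ.val.map w).sort (· ≤ ·)).get ⟨i.1, by simp⟩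

/-- Lexicographic order on `ℝ^m`: `lexLE m v u` means `v ⪯ u`, i.e. either `v = u`
or at the first coordinate where they differ, `u` is strictly larger. -/
def lexLE (m : ℕ) (v u : Fin m → ℝ) : Prop :=
  v = u ∨ ∃ i : Fin m, (∀ j < i, v j = u j) ∧ v i < u i

/-- The recursively defined sets `S_i^α`: `S_0^α = S` and `S_i^α` keeps those solutions of
`S_{i-1}^α` whose `i`-th smallest group utility is within `α_i` of the maximum `i`-th smallest
group utility over `S_{i-1}^α` (expressed as: at least every other value minus `α_i`). -/
noncomputable def recSets {σ : Type*} (m : ℕ) (S : Finset σ)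
    (u : σ → Fin m → ℝ) (α : Fin m → ℝ) : ℕ → Finset σ
  | 0 => S
  | (i+1) =>
    if h : i < m then
      (recSets m S u α i).filter (fun s => ∀ t ∈ recSets m S u α i,
        sortedVec m (u s) ⟨i, h⟩ ≥ sortedVec m (u t) ⟨i, h⟩ - α ⟨i, h⟩)
    else recSets m S u α i


/-- The instance of Example 12: `u(S₁,G₁) = ε`, `u(S₁,G₂) = 1/2`, `u(S₂,G₁) = 0`,
`u(S₂,G₂) = 1` with ε = 1/10. -/
noncomputable def exU19 : Fin 2 → Fin 2 → ℝ := ![![1/10, 1/2], ![0, 1]]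

theorem sortedVec_pair (a b : ℝ) (h : a ≤ b) : sortedVec 2 ![a,b] = ![a,b] := by
  have h1 : (Finset.univ.val.map ![a,b]) = ↑[a, b] := by
    simp [Finset.univ, Fintype.elems]; rfl
  have h2 : ((↑[a,b] : Multiset ℝ).sort (· ≤ ·)) = [a,b] := by
    rw [Multiset.coe_sort]
    apply List.mergeSort_eq_self
    simp [h]
  funext i
  fin_cases i <;> simp [sortedVec, h1, h2]

theorem sv0 : sortedVec 2 (exU19 0) = ![1/10, 1/2] := by
  have : exU19 0 = ![(1:ℝ)/10, 1/2] := by funext i; fin_cases i <;> simp [exU19]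
  rw [this, sortedVec_pair]; norm_num
theorem sv1 : sortedVec 2 (exU19 1) = ![0, 1] := by
  have : exU19 1 = ![(0:ℝ), 1] := by funext i; fin_cases i <;> simp [exU19]
  rw [this, sortedVec_pair]; norm_num

theorem level1 : recSets 2 Finset.univ exU19 (fun _ => (1/10 : ℝ)) 1 = Finset.univ := by
  ext s
  simp only [recSets, dif_pos (show 0 < 2 by norm_num),
    Finset.mem_filter, Finset.mem_univ, true_and, iff_true, Fin.forall_fin_two]
  fin_cases s <;> simp [sv0, sv1] <;> norm_num

theorem level2 : recSets 2 Finset.univ exU19 (fun _ => (1/10 : ℝ)) 2 = {1} := by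
  have h2 : recSets 2 Finset.univ exU19 (fun _ => (1/10 : ℝ)) 2
      = (recSets 2 Finset.univ exU19 (fun _ => (1/10 : ℝ)) 1).filter
        (fun s => ∀ t ∈ recSets 2 Finset.univ exU19 (fun _ => (1/10:ℝ)) 1,
          sortedVec 2 (exU19 s) ⟨1, by norm_num⟩ ≥ sortedVec 2 (exU19 t) ⟨1, by norm_num⟩ - 1/10) := by
    simp [recSets]
  rw [h2, level1]
  ext s
  simp only [Finset.mem_filter, Finset.mem_univ, true_and, Finset.mem_singleton,
    Fin.forall_fin_two]
  fin_cases s <;> simp [sv0, sv1] <;> norm_num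

/-- Example 12: both solutions are ε-recursively approximate leximax, but the constant-slack
ε-significance recursion keeps both solutions at level 1 and only `S₂` (index 1) at
level 2, so `S₂` is the unique ε-significant solution. -/
theorem significance_refines_recursive_example :
    (∀ s : Fin 2, ∃ α : Fin 2 → ℝ, (∀ i, α i ∈ Set.Icc 0 (1/10 : ℝ)) ∧
      s ∈ recSets 2 Finset.univ exU19 α 2) ∧
    recSets 2 Finset.univ exU19 (fun _ => (1/10 : ℝ)) 1 = Finset.univ ∧
    recSets 2 Finset.univ exU19 (fun _ => (1/10 : ℝ)) 2 = {1} := by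
  refine ⟨?_, level1, level2⟩
  intro s
  fin_cases s
  · refine ⟨fun _ => 0, fun i => ⟨le_refl _, by norm_num⟩, ?_⟩
    have l1 : recSets 2 Finset.univ exU19 (fun _ => (0:ℝ)) 1 = {0} := by
      ext t
      simp only [recSets, dif_pos (show 0 < 2 by norm_num), Finset.mem_filter,
        Finset.mem_univ, true_and, Finset.mem_singleton, Fin.forall_fin_two]
      fin_cases t <;> simp [sv0, sv1] <;> norm_num
    have h2 : recSets 2 Finset.univ exU19 (fun _ => (0:ℝ)) 2
        = (recSets 2 Finset.univ exU19 (fun _ => (0:ℝ)) 1).filter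
          (fun s => ∀ t ∈ recSets 2 Finset.univ exU19 (fun _ => (0:ℝ)) 1,
            sortedVec 2 (exU19 s) ⟨1, by norm_num⟩ ≥ sortedVec 2 (exU19 t) ⟨1, by norm_num⟩ - 0) := by
      simp [recSets]
    rw [h2, l1]
    simp [sv0]
  · exact ⟨fun _ => 1/10, fun i => ⟨by norm_num, le_refl _⟩, by rw [level2]; simp⟩
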